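/- arXiv:2308.07245 — 9 statements merged into one kernel-verified Lean document; each statement's English description precedes it below -/
import Mathlib

section
/- ϑ(x) ~ π(x)·log(x) as x → ∞, i.e., lim_{x→∞} ϑ(x)/(π(x)·log x) = 1. -/
/-! Abel summation gives `π(x) = θ(x) / log x + ∫₂ˣ θ(t) / (t log² t) dt`, and Chebyshev's upper
bound `θ(t) ≤ t log 4` makes the integral `O(x / log² x)`. Chebyshev's lower bound
`π(x) ≫ x / log x` turns this error into `o(π(x))`, so `θ(x) / log x ~ π(x)`. -/

open Finset Filter Real Asymptotics

noncomputable def primesUpTo (x : ℝ) : Finset ℕ := (Finset.Icc 1 ⌊x⌋₊).filter Nat.Prime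

noncomputable def cheTheta (x : ℝ) : ℝ := ∑ p ∈ primesUpTo x, Real.log p

noncomputable def chePsi (x : ℝ) : ℝ := ∑ n ∈ Finset.Icc 1 ⌊x⌋₊, ArithmeticFunction.vonMangoldt n

noncomputable def primePi (x : ℝ) : ℕ := (primesUpTo x).card

noncomputable def selTheta (x : ℝ) (n : ℕ) : ℝ :=
  ∑ d ∈ n.divisors, (ArithmeticFunction.moebius d : ℝ) * (Real.log (x / d)) ^ 2

open Chebyshev

lemma primesUpTo_eq_primesLE (x : ℝ) : primesUpTo x = Nat.primesLE ⌊x⌋₊ := by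
  ext p
  simp only [primesUpTo, mem_filter, mem_Icc, Nat.mem_primesLE]
  exact ⟨fun ⟨⟨_, hp⟩, hprime⟩ => ⟨hp, hprime⟩, fun ⟨hp, hprime⟩ => ⟨⟨hprime.one_le, hp⟩, hprime⟩⟩

lemma cheTheta_eq_theta (x : ℝ) : cheTheta x = θ x := by
  rw [cheTheta, theta_eq_sum_primesLE, primesUpTo_eq_primesLE]

lemma primePi_eq_primeCounting (x : ℝ) : primePi x = Nat.primeCounting ⌊x⌋₊ := by
  rw [primePi, primesUpTo_eq_primesLE, Nat.primesLE_card_eq_primeCounting]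

lemma eventually_div_log_le_primeCounting :
    ∀ᶠ x : ℝ in atTop, log 2 / 2 * (x / log x) ≤ Nat.primeCounting ⌊x⌋₊ := by
  have hlog2 : 0 < log 2 := log_pos one_lt_two
  filter_upwards [isLittleO_log_id_atTop.bound (c := log 2 / 4) (by positivity),
    eventually_ge_atTop (8 : ℝ)] with x hlog hx
  have hlogx : 0 < log x := log_pos (by linarith)
  rw [norm_of_nonneg hlogx.le, id, norm_of_nonneg (by linarith)] at hlog
  have hlog_add : log (x + 2) ≤ log 2 + log x := by
    rw [← log_mul two_ne_zero (by positivity)]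
    exact log_le_log (by positivity) (by linarith)
  calc log 2 / 2 * (x / log x) = log 2 / 2 * x / log x := by rw [mul_div_assoc]
    _ ≤ ((x - 1) * log 2 - log (x + 2)) / log x := by
        gcongr
        nlinarith
    _ ≤ Nat.primeCounting ⌊x⌋₊ := pi_ge' (by linarith)

lemma div_log_isBigO_primeCounting :
    (fun x : ℝ => x / log x) =O[atTop] (fun x => (Nat.primeCounting ⌊x⌋₊ : ℝ)) := by
  have hlog2 : 0 < log 2 := log_pos one_lt_two
  refine IsBigO.of_bound (2 / log 2) ?_
  filter_upwards [eventually_div_log_le_primeCounting, eventually_ge_atTop 1] with x hπ hx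
  rw [norm_of_nonneg (div_nonneg (by linarith) (log_nonneg hx)), Real.norm_natCast]
  calc x / log x = 2 / log 2 * (log 2 / 2 * (x / log x)) := by field_simp
    _ ≤ 2 / log 2 * Nat.primeCounting ⌊x⌋₊ := by gcongr

lemma div_log_sq_isLittleO_div_log :
    (fun x : ℝ => x / log x ^ 2) =o[atTop] (fun x => x / log x) := by
  refine (isLittleO_iff_tendsto' ?_).mpr ?_
  · filter_upwards [eventually_gt_atTop 1] with x hx h
    have : log x ≠ 0 := (log_pos hx).ne'
    simp_all
  · refine tendsto_log_atTop.inv_tendsto_atTop.congr' ?_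
    filter_upwards [eventually_gt_atTop 1] with x hx
    have : log x ≠ 0 := (log_pos hx).ne'
    rw [Pi.inv_apply]
    field_simp

theorem theta_div_log_isEquivalent_primeCounting :
    (fun x => θ x / log x) ~[atTop] (fun x => (Nat.primeCounting ⌊x⌋₊ : ℝ)) := by
  have h := (primeCounting_sub_theta_div_log_isBigO.trans_isLittleO
    div_log_sq_isLittleO_div_log).trans_isBigO div_log_isBigO_primeCounting
  exact h.neg_left.congr_left fun x => by simp

theorem stmt_1 :
    Tendsto (fun x : ℝ => cheTheta x / (primePi x * Real.log x)) atTop (nhds 1) := by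
  have hπ : ∀ᶠ x : ℝ in atTop, (Nat.primeCounting ⌊x⌋₊ : ℝ) ≠ 0 := by
    filter_upwards [eventually_div_log_le_primeCounting, eventually_gt_atTop 1] with x hπ hx
    have := log_pos hx
    have := log_pos one_lt_two
    exact (lt_of_lt_of_le (by positivity) hπ).ne'
  refine ((isEquivalent_iff_tendsto_one hπ).mp
    theta_div_log_isEquivalent_primeCounting).congr fun x => ?_
  rw [cheTheta_eq_theta, primePi_eq_primeCounting, div_mul_eq_div_div_swap, Pi.div_apply]
end

section
/- The statement ϑ(x) ~ x (as x → ∞) implies the Prime Number Theorem π(x) ~ x/log(x), and conversely. -/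
/-!
Every prime `p ≤ x` has `log p ≤ log x`, so `ϑ(x) ≤ π(x) log x`. Conversely, for `0 < δ < 1`
the primes `p ≤ x^(1-δ)` number at most `x^(1-δ)`, while each larger prime contributes more than
`(1-δ) log x` to `ϑ(x)`; hence `π(x) log x / x ≤ (ϑ(x)/x) / (1-δ) + log x / x^δ`. Once `ϑ(x)/x`
is bounded, which either hypothesis gives, the two ratios therefore differ by a quantity tending
to `0`.
-/

open Finset Filter Real Asymptotics

open Topology

theorem mem_primesUpTo {x : ℝ} {p : ℕ} : p ∈ primesUpTo x ↔ p.Prime ∧ (p : ℝ) ≤ x := by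
  simp only [primesUpTo, mem_filter, mem_Icc]
  constructor
  · rintro ⟨⟨-, hpx⟩, hp⟩
    exact ⟨hp, (Nat.le_floor_iff' hp.ne_zero).1 hpx⟩
  · rintro ⟨hp, hpx⟩
    exact ⟨⟨hp.one_le, (Nat.le_floor_iff' hp.ne_zero).2 hpx⟩, hp⟩

theorem primePi_le {x : ℝ} (hx : 0 ≤ x) : (primePi x : ℝ) ≤ x :=
  calc (primePi x : ℝ) ≤ ⌊x⌋₊ := by
        exact_mod_cast (card_filter_le _ _).trans (Nat.card_Icc 1 ⌊x⌋₊).le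
    _ ≤ x := Nat.floor_le hx

theorem cheTheta_le_primePi_mul_log (x : ℝ) : cheTheta x ≤ primePi x * log x := by
  rw [primePi, ← nsmul_eq_mul]
  refine sum_le_card_nsmul _ _ _ fun p hp => ?_
  obtain ⟨hp, hpx⟩ := mem_primesUpTo.1 hp
  exact log_le_log (by exact_mod_cast hp.pos) hpx

theorem primePi_le_add_cheTheta_div_log (x : ℝ) {y : ℝ} (hy : 1 < y) :
    (primePi x : ℝ) ≤ y + cheTheta x / log y := by
  have hlog : 0 < log y := log_pos hy
  set small := (primesUpTo x).filter fun p : ℕ => (p : ℝ) ≤ y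
  set large := (primesUpTo x).filter fun p : ℕ => ¬ (p : ℝ) ≤ y
  have h_small : (small.card : ℝ) ≤ y :=
    calc (small.card : ℝ) ≤ primePi y := by
          refine Nat.cast_le.2 (card_le_card fun p hp => ?_)
          obtain ⟨hpx, hpy⟩ := mem_filter.1 hp
          exact mem_primesUpTo.2 ⟨(mem_primesUpTo.1 hpx).1, hpy⟩
      _ ≤ y := primePi_le (by linarith)
  have h_large : (large.card : ℝ) * log y ≤ cheTheta x := by
    rw [← nsmul_eq_mul]
    calc large.card • log y ≤ ∑ p ∈ large, log p :=
          card_nsmul_le_sum _ _ _ fun p hp =>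
            log_le_log (by linarith) (not_le.1 (mem_filter.1 hp).2).le
      _ ≤ cheTheta x := sum_le_sum_of_subset_of_nonneg (filter_subset _ _) fun p hp _ =>
          log_nonneg (by exact_mod_cast (mem_primesUpTo.1 hp).1.one_le)
  rw [primePi, ← card_filter_add_card_filter_not (fun p : ℕ => (p : ℝ) ≤ y), Nat.cast_add]
  exact add_le_add h_small ((le_div_iff₀ hlog).2 h_large)

theorem cheTheta_div_le_primePi_div {x : ℝ} (hx : 0 < x) :
    cheTheta x / x ≤ primePi x / (x / log x) := by
  rw [div_div_eq_mul_div]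
  exact div_le_div_of_nonneg_right (cheTheta_le_primePi_mul_log x) hx.le

theorem primePi_div_le {x δ : ℝ} (hx : 1 < x) (hδ0 : 0 < δ) (hδ1 : δ < 1) :
    primePi x / (x / log x) ≤ cheTheta x / x / (1 - δ) + log x / x ^ δ := by
  have hx0 : 0 < x := by linarith
  have hlog : 0 < log x := log_pos hx
  have hπ := primePi_le_add_cheTheta_div_log x (one_lt_rpow hx (by linarith : 0 < 1 - δ))
  rw [log_rpow hx0, rpow_sub hx0, rpow_one] at hπ
  have hxδ : 0 < x ^ δ := rpow_pos_of_pos hx0 δ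
  have h1δ : 0 < 1 - δ := by linarith
  calc (primePi x : ℝ) / (x / log x) = primePi x * (log x / x) := by field_simp
    _ ≤ (x / x ^ δ + cheTheta x / ((1 - δ) * log x)) * (log x / x) := by gcongr
    _ = cheTheta x / x / (1 - δ) + log x / x ^ δ := by field_simp; ring

theorem tendsto_primePi_div_sub_cheTheta_div
    (hb : IsBoundedUnder (· ≤ ·) atTop fun x => cheTheta x / x) :
    Tendsto (fun x => primePi x / (x / log x) - cheTheta x / x) atTop (𝓝 0) := by
  obtain ⟨C, hC⟩ := hb
  rw [eventually_map] at hC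
  refine tendsto_order.2 ⟨fun a ha => ?_, fun ε hε => ?_⟩
  · filter_upwards [eventually_gt_atTop 0] with x hx
    exact ha.trans_le (sub_nonneg.2 (cheTheta_div_le_primePi_div hx))
  have hcont : ContinuousAt (fun δ : ℝ => C * (δ / (1 - δ))) 0 := by fun_prop (disch := norm_num)
  have hδ : ∀ᶠ δ in 𝓝[>] (0 : ℝ), 0 < δ ∧ δ < 1 ∧ C * (δ / (1 - δ)) < ε / 2 :=
    eventually_mem_nhdsWithin.and <| Eventually.filter_mono nhdsWithin_le_nhds <|
      (eventually_lt_nhds one_pos).and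
        (hcont.tendsto.eventually_lt_const (by simpa using half_pos hε))
  obtain ⟨δ, hδ0, hδ1, hCδ⟩ := hδ.exists
  have hlog : Tendsto (fun x => log x / x ^ δ) atTop (𝓝 0) :=
    (isLittleO_log_rpow_atTop hδ0).tendsto_div_nhds_zero
  filter_upwards [hC, eventually_gt_atTop 1, hlog.eventually_lt_const (half_pos hε)]
    with x hθ hx hlogx
  have hsplit : cheTheta x / x / (1 - δ) = cheTheta x / x + cheTheta x / x * (δ / (1 - δ)) := by
    field_simp [show 1 - δ ≠ 0 by linarith]; ring
  have hθδ : cheTheta x / x * (δ / (1 - δ)) ≤ C * (δ / (1 - δ)) :=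
    mul_le_mul_of_nonneg_right hθ (div_nonneg hδ0.le (by linarith))
  linarith [primePi_div_le hx hδ0 hδ1]

theorem stmt_2 :
    Tendsto (fun x : ℝ => cheTheta x / x) atTop (nhds 1) ↔
      Tendsto (fun x : ℝ => primePi x / (x / Real.log x)) atTop (nhds 1) := by
  constructor
  · intro h
    simpa using h.add (tendsto_primePi_div_sub_cheTheta_div h.isBoundedUnder_le)
  · intro h
    have hb : IsBoundedUnder (· ≤ ·) atTop fun x => cheTheta x / x :=
      h.isBoundedUnder_le.mono_le <| by
        filter_upwards [eventually_gt_atTop 0] with x hx using cheTheta_div_le_primePi_div hx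
    simpa using h.sub (tendsto_primePi_div_sub_cheTheta_div hb)
end

section
/- Let x > 0, λ_d = μ(d)·log²(x/d), and θ_n = ∑_{d | n} λ_d. If n = p^α · q^β with p, q distinct primes and α, β ≥ 1, then θ_n = 2·log(p)·log(q). -/
open Finset Filter Real Asymptotics

/-! Only squarefree divisors carry weight in a Möbius sum, so the divisors of `p ^ α * q ^ β`
may be replaced by those of `p * q`. Writing `L = log x`, `a = log p`, `b = log q`, what remains
is the second difference `L² - (L - a)² - (L - b)² + (L - a - b)² = 2ab`. -/

namespace Nat

theorem Coprime.sum_divisors_mul_eq_sum_sum {R : Type*} [AddCommMonoid R] {m n : ℕ}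
    (hmn : m.Coprime n) (f : ℕ → R) :
    ∑ d ∈ (m * n).divisors, f d = ∑ a ∈ m.divisors, ∑ b ∈ n.divisors, f (a * b) := by
  rw [Nat.divisors_mul, Finset.mul_def, sum_image hmn.mul_injOn_divisors, sum_product]

open ArithmeticFunction

theorem sum_divisors_moebius_mul_eq_prod_primeFactors {R : Type*} [Ring R] {n : ℕ} (hn : n ≠ 0)
    (f : ℕ → R) :
    ∑ d ∈ n.divisors, (moebius d : R) * f d =
      ∑ d ∈ (∏ p ∈ n.primeFactors, p).divisors, (moebius d : R) * f d := by
  refine (sum_subset (divisors_subset_of_dvd hn n.prod_primeFactors_dvd) ?_).symm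
  intro d hdn hd_rad
  suffices ¬Squarefree d by simp [moebius_eq_zero_of_not_squarefree this]
  intro hd
  refine hd_rad (mem_divisors.mpr ⟨?_, ne_zero_of_dvd_ne_zero hn n.prod_primeFactors_dvd⟩)
  rw [← prod_primeFactors_of_squarefree hd]
  exact prod_dvd_prod_of_subset _ _ _ (primeFactors_mono (dvd_of_mem_divisors hdn) hn)

theorem sum_divisors_mul_primes_moebius_mul {R : Type*} [CommRing R] {p q : ℕ} (hp : p.Prime)
    (hq : q.Prime) (hpq : p ≠ q) (f : ℕ → R) :
    ∑ d ∈ (p * q).divisors, (moebius d : R) * f d = f 1 - f p - f q + f (p * q) := by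
  have hcop : p.Coprime q := (coprime_primes hp hq).mpr hpq
  rw [hcop.sum_divisors_mul_eq_sum_sum]
  simp only [hp.sum_divisors, hq.sum_divisors, mul_one, one_mul, moebius_apply_one,
    isMultiplicative_moebius.map_mul_of_coprime hcop, moebius_apply_prime hp,
    moebius_apply_prime hq]
  push_cast
  ring

theorem prod_primeFactors_prime_pow_mul_prime_pow {p q α β : ℕ} (hp : p.Prime) (hq : q.Prime)
    (hpq : p ≠ q) (hα : α ≠ 0) (hβ : β ≠ 0) :
    ∏ r ∈ (p ^ α * q ^ β).primeFactors, r = p * q := by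
  rw [primeFactors_mul (pow_ne_zero _ hp.ne_zero) (pow_ne_zero _ hq.ne_zero),
    primeFactors_prime_pow hα hp, primeFactors_prime_pow hβ hq, ← insert_eq, prod_pair hpq]

end Nat

theorem stmt_6 (x : ℝ) (hx : 0 < x) (p q α β : ℕ) (hp : p.Prime) (hq : q.Prime)
    (hpq : p ≠ q) (hα : 1 ≤ α) (hβ : 1 ≤ β) :
    selTheta x (p ^ α * q ^ β) = 2 * Real.log p * Real.log q := by
  have hp0 : (p : ℝ) ≠ 0 := Nat.cast_ne_zero.mpr hp.ne_zero
  have hq0 : (q : ℝ) ≠ 0 := Nat.cast_ne_zero.mpr hq.ne_zero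
  have hn0 : p ^ α * q ^ β ≠ 0 := 
    mul_ne_zero (pow_ne_zero _ hp.ne_zero) (pow_ne_zero _ hq.ne_zero)
  rw [selTheta, Nat.sum_divisors_moebius_mul_eq_prod_primeFactors hn0,
    Nat.prod_primeFactors_prime_pow_mul_prime_pow hp hq hpq (by omega) (by omega),
    Nat.sum_divisors_mul_primes_moebius_mul hp hq hpq]
  simp only [Nat.cast_one, div_one, Nat.cast_mul, Real.log_div hx.ne' hp0, Real.log_div hx.ne' hq0,
    Real.log_div hx.ne' (mul_ne_zero hp0 hq0), Real.log_mul hp0 hq0]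
  ring
end

section
/- Let x > 0, λ_d = μ(d)·log²(x/d), and θ_n = ∑_{d | n} λ_d. If n has at least three distinct prime factors, then θ_n = 0. -/
open Finset Filter Real Asymptotics

/-! Grouping the squarefree divisors of `n` by their sets of prime factors, `θ_n` is the
alternating sum `∑_{S ⊆ P} (-1)^|S| q(∑_{p ∈ S} log p)` over the set `P` of primes dividing
`n`, with `q(t) = (t - log x)^2`. Such an alternating sum vanishes for every polynomial `q` of
degree less than `|P|`: splitting off one prime `a` turns it into the alternating sum over
`P \ {a}` of `q(t + log a) - q(t)`, a polynomial of smaller degree. -/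

open Polynomial
open scoped ArithmeticFunction.Moebius

lemma Polynomial.degree_taylor_sub_lt {R : Type*} [CommRing R] {f : R[X]} (hf : f ≠ 0) (r : R) :
    (taylor r f - f).degree < f.degree := by
  rw [← degree_taylor f r]
  exact degree_sub_lt_left (degree_taylor f r) ((taylor_eq_zero r f).not.mpr hf)
    (leadingCoeff_taylor ..)

theorem Finset.sum_powerset_neg_one_pow_card_mul_eval_sum_eq_zero {α R : Type*} [DecidableEq α]
    [CommRing R] (P : Finset α) (c : α → R) {q : R[X]}
    (hq : q.degree < (P.card : WithBot ℕ)) :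
    ∑ S ∈ P.powerset, (-1) ^ S.card * q.eval (∑ p ∈ S, c p) = 0 := by
  induction P using Finset.induction_on generalizing q with
  | empty => simp [degree_eq_bot.mp (WithBot.lt_coe_bot.mp hq)]
  | insert a Q ha ih =>
    have hdiff : (taylor (c a) q - q).degree < (Q.card : WithBot ℕ) := by
      rcases eq_or_ne q 0 with rfl | hq0
      · simp
      rw [card_insert_of_notMem ha, Nat.cast_succ] at hq
      exact (degree_taylor_sub_lt hq0 _).trans_le (Order.le_of_lt_succ hq)
    rw [sum_powerset_insert ha, ← neg_eq_zero, ← ih hdiff, neg_add', ← sum_neg_distrib,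
      ← sum_sub_distrib]
    refine sum_congr rfl fun S hS => ?_
    have haS : a ∉ S := fun h => ha (mem_powerset.mp hS h)
    rw [card_insert_of_notMem haS, sum_insert haS, eval_sub, taylor_eval, pow_succ, add_comm (c a)]
    ring

theorem ArithmeticFunction.sum_divisors_moebius_mul_eq_sum_powerset {R : Type*} [CommRing R]
    {n : ℕ} (hn : n ≠ 0) (f : ℕ → R) :
    ∑ d ∈ n.divisors, (μ d : R) * f d =
      ∑ S ∈ n.primeFactors.powerset, (-1) ^ S.card * f (∏ p ∈ S, p) := by
  rw [← sum_filter_of_ne (p := Squarefree) fun d _ h => ?_, Nat.sum_divisors_filter_squarefree hn,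
    Nat.factors_eq]
  · refine sum_congr (by simp) fun S hS => ?_
    have hprime : ∀ p ∈ S, p.Prime := fun p hp =>
      Nat.prime_of_mem_primeFactors (mem_powerset.mp hS hp)
    rw [Finset.prod_val, Function.id_def, isMultiplicative_moebius.map_prod_of_prime S hprime]
    simp [prod_congr rfl fun p hp => moebius_apply_prime (hprime p hp)]
  · by_contra hsq
    simp [moebius_eq_zero_of_not_squarefree hsq] at h

theorem ArithmeticFunction.sum_divisors_moebius_mul_eval_log_eq_zero {n : ℕ} {q : ℝ[X]}
    (hq : q.degree < (n.primeFactors.card : WithBot ℕ)) :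
    ∑ d ∈ n.divisors, (μ d : ℝ) * q.eval (Real.log d) = 0 := by
  rcases eq_or_ne n 0 with rfl | hn
  · simp
  rw [sum_divisors_moebius_mul_eq_sum_powerset hn,
    ← sum_powerset_neg_one_pow_card_mul_eval_sum_eq_zero _ (fun p : ℕ => Real.log p) hq]
  refine sum_congr rfl fun S hS => ?_
  have hprime : ∀ p ∈ S, p.Prime := fun p hp =>
    Nat.prime_of_mem_primeFactors (mem_powerset.mp hS hp)
  rw [Nat.cast_prod, Real.log_prod fun p hp => Nat.cast_ne_zero.mpr (hprime p hp).ne_zero]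

theorem stmt_7 (x : ℝ) (hx : 0 < x) (n : ℕ) (hn : 3 ≤ n.primeFactors.card) :
    selTheta x n = 0 := by
  have hdeg : ((X - C (Real.log x)) ^ 2).degree < (n.primeFactors.card : WithBot ℕ) := by
    rw [degree_pow, degree_X_sub_C, nsmul_one]
    exact_mod_cast hn
  unfold selTheta
  rw [← ArithmeticFunction.sum_divisors_moebius_mul_eval_log_eq_zero hdeg]
  refine sum_congr rfl fun d hd => ?_
  rw [eval_pow, eval_sub, eval_X, eval_C, sub_sq_comm,
    Real.log_div hx.ne' (Nat.cast_ne_zero.mpr (Nat.pos_of_mem_divisors hd).ne')]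
end

section
/- (Mertens-type estimate) ∑_{p ≤ x, p prime} log(p)/p = log(x) + O(1). -/
/-! Since `Λ * ζ = log`, `log N! = ∑_{d ≤ N} Λ(d) ⌊N/d⌋`. Stirling gives
`N log N - N ≤ log N! ≤ N log N`, and replacing `⌊N/d⌋` by `N/d` costs at most
`ψ(N) = O(N)` (Chebyshev), so `∑_{d ≤ N} Λ(d)/d = log N + O(1)`. The prime powers `p^k` with
`k ≥ 2` contribute at most `∑_p log p / (p(p-1))`, a convergent series, and passing from
`⌊x⌋` to `x` changes the logarithm by at most `log 2`. -/

open Finset Filter Real Asymptotics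

open ArithmeticFunction

lemma sum_log_eq_log_factorial (N : ℕ) : ∑ n ∈ Ioc 0 N, Real.log n = Real.log N.factorial := by
  rw [← prod_Ico_id_eq_factorial, ← Ico_add_one_add_one_eq_Ioc, Nat.cast_prod, Real.log_prod]
  · rfl
  · intro n hn
    rw [mem_Ico] at hn
    exact_mod_cast (by omega : n ≠ 0)

lemma sum_log_le_mul_log (N : ℕ) : ∑ n ∈ Ioc 0 N, Real.log n ≤ N * Real.log N := by
  rw [sum_log_eq_log_factorial, ← Real.log_pow]
  gcongr
  exact_mod_cast N.factorial_le_pow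

lemma mul_log_sub_le_sum_log (N : ℕ) : N * Real.log N - N ≤ ∑ n ∈ Ioc 0 N, Real.log n := by
  rcases eq_or_ne N 0 with rfl | hN
  · simp
  rw [sum_log_eq_log_factorial]
  have h2π : 0 ≤ Real.log (2 * π) := Real.log_nonneg (by linarith [Real.pi_gt_three])
  linarith [Stirling.le_log_factorial_stirling hN, Real.log_natCast_nonneg N]

lemma sum_log_eq_sum_vonMangoldt_mul_div (N : ℕ) :
    ∑ n ∈ Ioc 0 N, Real.log n = ∑ d ∈ Ioc 0 N, Λ d * (N / d : ℕ) := by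
  simp_rw [← sum_Ioc_mul_zeta_eq_sum, vonMangoldt_mul_zeta, log_apply]

lemma div_sub_one_le_natCast_div (m n : ℕ) : (m / n : ℝ) - 1 ≤ (m / n : ℕ) := by
  rw [← Nat.floor_div_eq_div (K := ℝ)]
  exact (Nat.sub_one_lt_floor _).le

section WeightedDivisorSum

variable (a : ℕ → ℝ) (s : Finset ℕ) (N : ℕ)

lemma sum_mul_natDiv_le (ha : ∀ d, 0 ≤ a d) :
    ∑ d ∈ s, a d * (N / d : ℕ) ≤ N * ∑ d ∈ s, a d / d := by
  rw [mul_sum]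
  refine sum_le_sum fun d _ => ?_
  calc a d * (N / d : ℕ) ≤ a d * (N / d) := mul_le_mul_of_nonneg_left Nat.cast_div_le (ha d)
    _ = N * (a d / d) := by ring

lemma mul_sum_div_sub_le_sum_mul_natDiv (ha : ∀ d, 0 ≤ a d) :
    N * ∑ d ∈ s, a d / d - ∑ d ∈ s, a d ≤ ∑ d ∈ s, a d * (N / d : ℕ) := by
  rw [mul_sum, ← sum_sub_distrib]
  refine sum_le_sum fun d _ => ?_
  calc N * (a d / d) - a d = a d * (N / d - 1) := by ring
    _ ≤ a d * (N / d : ℕ) := mul_le_mul_of_nonneg_left (div_sub_one_le_natCast_div N d) (ha d)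

end WeightedDivisorSum

lemma psi_natCast (N : ℕ) : Chebyshev.psi N = ∑ n ∈ Ioc 0 N, Λ n := by
  rw [Chebyshev.psi, Nat.floor_natCast]

theorem abs_sum_vonMangoldt_div_sub_log_le {N : ℕ} (hN : N ≠ 0) :
    |∑ n ∈ Ioc 0 N, Λ n / n - Real.log N| ≤ Real.log 4 + 4 := by
  set S := ∑ n ∈ Ioc 0 N, Λ n / n
  have hΛ : ∀ d, 0 ≤ Λ d := fun _ => vonMangoldt_nonneg
  have hNpos : (0 : ℝ) < N := by positivity
  have hupper : N * S ≤ N * (Real.log N + (Real.log 4 + 4)) := by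
    have := mul_sum_div_sub_le_sum_mul_natDiv _ (Ioc 0 N) N hΛ
    have hψ := Chebyshev.psi_le_const_mul_self (Nat.cast_nonneg N)
    rw [psi_natCast] at hψ
    rw [← sum_log_eq_sum_vonMangoldt_mul_div] at this
    linarith [sum_log_le_mul_log N]
  have hlower : N * (Real.log N - 1) ≤ N * S := by
    have := sum_mul_natDiv_le _ (Ioc 0 N) N hΛ
    rw [← sum_log_eq_sum_vonMangoldt_mul_div] at this
    linarith [mul_log_sub_le_sum_log N]
  rw [abs_le]
  constructor
  · linarith [le_of_mul_le_mul_left hlower hNpos, Real.log_nonneg (by norm_num : (1:ℝ) ≤ 4)]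
  · linarith [le_of_mul_le_mul_left hupper hNpos]

lemma sum_Ico_two_inv_pow_le {r : ℝ} (hr : 1 < r) (n : ℕ) :
    ∑ k ∈ Ico 2 n, (r ^ k)⁻¹ ≤ (r * (r - 1))⁻¹ := by
  have hr0 : 0 < r := by linarith
  simp_rw [← inv_pow]
  calc ∑ k ∈ Ico 2 n, r⁻¹ ^ k ≤ r⁻¹ ^ 2 / (1 - r⁻¹) :=
        geom_sum_Ico_le_of_lt_one (by positivity) (inv_lt_one_of_one_lt₀ hr)
    _ = (r * (r - 1))⁻¹ := by
        have : r - 1 ≠ 0 := by linarith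
        field_simp

lemma exists_prime_pow_of_isPrimePow_of_not_prime {n : ℕ} (hn : IsPrimePow n) (hnp : ¬ n.Prime) :
    ∃ p k, p.Prime ∧ p ≤ n ∧ 2 ≤ k ∧ k < n ∧ p ^ k = n := by
  obtain ⟨p, k, hp, hk, rfl⟩ := (isPrimePow_nat_iff n).1 hn
  have hk2 : 2 ≤ k := by
    by_contra! h
    obtain rfl : k = 1 := by omega
    exact hnp (by simpa using hp)
  exact ⟨p, k, hp, Nat.le_self_pow (by omega) p, hk2, Nat.lt_pow_self hp.one_lt, rfl⟩

lemma sum_vonMangoldt_div_not_prime_le (N : ℕ) :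
    ∑ n ∈ Ioc 0 N with ¬ n.Prime, Λ n / n
      ≤ ∑ p ∈ Ioc 0 N with p.Prime, Real.log p / (p * (p - 1)) := by
  set P := {p ∈ Ioc 0 N | p.Prime}
  have hinj : Set.InjOn (fun q : ℕ × ℕ => q.1 ^ q.2) ↑(P ×ˢ Ico 2 N) := by
    rintro ⟨p, k⟩ hpk ⟨q, l⟩ hql h
    simp only [mem_coe, mem_product, mem_filter, mem_Ico, P] at hpk hql
    obtain ⟨rfl, rfl⟩ := Nat.Prime.pow_inj' hpk.1.2 hql.1.2 (by omega) (by omega) h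
    rfl
  calc ∑ n ∈ Ioc 0 N with ¬ n.Prime, Λ n / n
      ≤ ∑ n ∈ (P ×ˢ Ico 2 N).image (fun q => q.1 ^ q.2), Λ n / n := by
        rw [← sum_filter_ne_zero]
        refine sum_le_sum_of_subset_of_nonneg (fun n hn => ?_) (fun _ _ _ => by positivity)
        simp only [mem_filter, mem_Ioc, ne_eq, div_eq_zero_iff, not_or] at hn
        obtain ⟨⟨⟨hn0, hnN⟩, hnp⟩, hΛ, -⟩ := hn
        obtain ⟨p, k, hp, hpn, hk, hkn, rfl⟩ :=
          exists_prime_pow_of_isPrimePow_of_not_prime (vonMangoldt_ne_zero_iff.1 hΛ) hnp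
        exact mem_image.2 ⟨(p, k), by simp [P, hp, hp.pos]; omega, rfl⟩
    _ = ∑ p ∈ P, Real.log p * ∑ k ∈ Ico 2 N, ((p : ℝ) ^ k)⁻¹ := by
        rw [sum_image hinj, sum_product]
        refine sum_congr rfl fun p hp => ?_
        rw [mul_sum]
        refine sum_congr rfl fun k hk => ?_
        rw [vonMangoldt_apply_pow (by simp at hk; omega),
          vonMangoldt_apply_prime (mem_filter.1 hp).2, Nat.cast_pow, div_eq_mul_inv]
    _ ≤ ∑ p ∈ P, Real.log p / (p * (p - 1)) := by
        refine sum_le_sum fun p hp => ?_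
        have hp1 : (1 : ℝ) < p := by exact_mod_cast (mem_filter.1 hp).2.one_lt
        rw [div_eq_mul_inv]
        exact mul_le_mul_of_nonneg_left (sum_Ico_two_inv_pow_le hp1 N) (Real.log_nonneg hp1.le)

lemma log_div_mul_sub_one_nonneg (m : ℕ) : 0 ≤ Real.log m / (m * (m - 1)) := by
  rcases Nat.eq_zero_or_pos m with rfl | hm
  · simp
  have hm1 : (1 : ℝ) ≤ m := by exact_mod_cast hm
  exact div_nonneg (Real.log_natCast_nonneg m) (mul_nonneg m.cast_nonneg (sub_nonneg.2 hm1))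

lemma log_div_mul_sub_one_le (m : ℕ) :
    Real.log m / (m * (m - 1)) ≤ 4 * (m : ℝ) ^ (-3 / 2 : ℝ) := by
  rcases lt_or_ge m 2 with hm | hm
  · interval_cases m <;> simp
  have hm2 : (2 : ℝ) ≤ m := by exact_mod_cast hm
  have hlog : Real.log m ≤ 2 * (m : ℝ) ^ (1 / 2 : ℝ) := by
    have := Real.log_le_rpow_div (Nat.cast_nonneg m) (by norm_num : (0 : ℝ) < 1 / 2)
    linarith
  have hden : (m : ℝ) ^ 2 / 2 ≤ m * (m - 1) := by nlinarith
  calc Real.log m / (m * (m - 1)) ≤ 2 * (m : ℝ) ^ (1 / 2 : ℝ) / ((m : ℝ) ^ 2 / 2) :=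
        div_le_div₀ (by positivity) hlog (by positivity) hden
    _ = 4 * (m : ℝ) ^ (1 / 2 - (2 : ℕ) : ℝ) := by
        rw [Real.rpow_sub_natCast (by positivity)]
        ring
    _ = 4 * (m : ℝ) ^ (-3 / 2 : ℝ) := by norm_num

lemma summable_log_div_mul_sub_one : Summable fun m : ℕ => Real.log m / (m * (m - 1)) :=
  .of_nonneg_of_le log_div_mul_sub_one_nonneg log_div_mul_sub_one_le
    ((Real.summable_nat_rpow.2 (by norm_num)).mul_left 4)

theorem abs_sum_log_prime_div_sub_log_le {N : ℕ} (hN : N ≠ 0) :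
    |∑ p ∈ Ioc 0 N with p.Prime, Real.log p / p - Real.log N|
      ≤ (∑' m : ℕ, Real.log m / (m * (m - 1))) + Real.log 4 + 4 := by
  have hsplit : ∑ n ∈ Ioc 0 N, Λ n / n
      = ∑ p ∈ Ioc 0 N with p.Prime, Real.log p / p + ∑ n ∈ Ioc 0 N with ¬ n.Prime, Λ n / n := by
    rw [← sum_filter_add_sum_filter_not _ Nat.Prime]
    congr 1
    exact sum_congr rfl fun p hp => by rw [vonMangoldt_apply_prime (mem_filter.1 hp).2]
  have hrest_nonneg : 0 ≤ ∑ n ∈ Ioc 0 N with ¬ n.Prime, Λ n / n := by positivity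
  have hrest_le : ∑ n ∈ Ioc 0 N with ¬ n.Prime, Λ n / n ≤ ∑' m : ℕ, Real.log m / (m * (m - 1)) :=
    (sum_vonMangoldt_div_not_prime_le N).trans <|
      summable_log_div_mul_sub_one.sum_le_tsum _ fun m _ => log_div_mul_sub_one_nonneg m
  have hΛ := abs_le.1 (abs_sum_vonMangoldt_div_sub_log_le hN)
  rw [abs_le]
  constructor <;> linarith [hΛ.1, hΛ.2, Real.log_nonneg (by norm_num : (1 : ℝ) ≤ 4)]

lemma abs_log_natFloor_sub_log_le {x : ℝ} (hx : 1 ≤ x) :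
    |Real.log ⌊x⌋₊ - Real.log x| ≤ Real.log 2 := by
  have hN : (1 : ℝ) ≤ ⌊x⌋₊ := by exact_mod_cast Nat.one_le_floor_iff x |>.2 hx
  have hNx : (⌊x⌋₊ : ℝ) ≤ x := Nat.floor_le (by linarith)
  have hxN : x ≤ 2 * ⌊x⌋₊ := by linarith [Nat.lt_floor_add_one x]
  have hle : Real.log ⌊x⌋₊ ≤ Real.log x := Real.log_le_log (by linarith) hNx
  have hge : Real.log x ≤ Real.log 2 + Real.log ⌊x⌋₊ := by
    rw [← Real.log_mul (by norm_num) (by positivity)]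
    exact Real.log_le_log (by linarith) hxN
  rw [abs_sub_comm, abs_of_nonneg (by linarith)]
  linarith

theorem stmt_8 :
    ∃ C : ℝ, ∀ x : ℝ, 2 ≤ x →
      |(∑ p ∈ primesUpTo x, Real.log p / p) - Real.log x| ≤ C := by
  refine ⟨(∑' m : ℕ, Real.log m / (m * (m - 1))) + Real.log 4 + 4 + Real.log 2, fun x hx => ?_⟩
  have hN : ⌊x⌋₊ ≠ 0 := (Nat.floor_pos.2 (by linarith)).ne'
  have hprimes : primesUpTo x = {p ∈ Ioc 0 ⌊x⌋₊ | p.Prime} := by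
    rw [primesUpTo, ← Icc_add_one_left_eq_Ioc, zero_add]
  rw [hprimes]
  exact (abs_sub_le _ (Real.log ⌊x⌋₊) _).trans <|
    add_le_add (abs_sum_log_prime_div_sub_log_le hN) (abs_log_natFloor_sub_log_le (by linarith))
end

section
/- (Chebyshev bound) ψ(x) = O(x) as x → ∞, i.e., there exists a constant C such that ψ(x) ≤ C·x for all x ≥ 1. -/
open Finset Filter Real Asymptotics

theorem chePsi_eq_psi (x : ℝ) : chePsi x = Chebyshev.psi x := by
  rw [chePsi, Chebyshev.psi, ← Finset.Icc_add_one_left_eq_Ioc, zero_add]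

theorem stmt_9 : ∃ C : ℝ, ∀ x : ℝ, 1 ≤ x → chePsi x ≤ C * x :=
  ⟨log 4 + 4, fun x hx => chePsi_eq_psi x ▸ Chebyshev.psi_le_const_mul_self (by linarith)⟩
end

section
/- ∑_{n ≤ z} τ(n) = z·log(z) + C·z + O(√z) for z ≥ 1, for some absolute constant C, where τ(n) is the number of positive divisors of n. -/
open Finset Filter Real Asymptotics

/-! Dirichlet's hyperbola method. Counting the lattice points `(a, d)` with `a * d ≤ N` on both sides
of the diagonal gives `∑_{n ≤ N} τ(n) = 2 ∑_{d ≤ K} ⌊N / d⌋ - K²` with `K = ⌊√N⌋`, a sum of only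
`K` terms. Dropping the floors costs `O(K)`, and `∑_{d ≤ K} 1 / d = log K + γ + O(1 / K)` turns the
right-hand side into `N log N + (2γ - 1) N + O(√N)`. Passing from `N = ⌊z⌋` to `z` costs only
`O(log z)`. -/

lemma Nat.Ioc_filter_mul_le {L M N d : ℕ} (hd : 0 < d) :
    {x ∈ Ioc L M | x * d ≤ N} = Ioc L (min M (N / d)) := by
  ext x
  simp only [mem_filter, mem_Ioc, le_min_iff, Nat.le_div_iff_mul_le hd]
  tauto

-- Both sides count the pairs `(a, d)` with `a ≤ √N < d` and `a * d ≤ N`.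
lemma Nat.sum_Ioc_sqrt_div_eq_sum_sub_sqrt (N : ℕ) :
    ∑ d ∈ Ioc N.sqrt N, N / d = ∑ a ∈ Ioc 0 N.sqrt, (N / a - N.sqrt) := by
  set K := N.sqrt
  have hd_count : ∀ d ∈ Ioc K N, N / d = #{a ∈ Ioc 0 K | a * d ≤ N} := by
    intro d hd
    have hKd := (mem_Ioc.1 hd).1
    have hdiv : N / d ≤ K := Nat.lt_succ_iff.1 <| (Nat.div_lt_iff_lt_mul (by omega)).2 <|
      (Nat.lt_succ_sqrt N).trans_le (Nat.mul_le_mul_left _ hKd)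
    rw [Nat.Ioc_filter_mul_le (by omega), Nat.card_Ioc, min_eq_right hdiv, Nat.sub_zero]
  have ha_count : ∀ a ∈ Ioc 0 K, #{d ∈ Ioc K N | d * a ≤ N} = N / a - K := by
    intro a ha
    rw [Nat.Ioc_filter_mul_le (mem_Ioc.1 ha).1, Nat.card_Ioc, min_eq_right (Nat.div_le_self _ _)]
  rw [sum_congr rfl hd_count]
  simp_rw [card_filter]
  rw [sum_comm]
  refine sum_congr rfl fun a ha => ?_
  rw [← ha_count a ha, card_filter]
  simp_rw [mul_comm]

theorem Nat.sum_div_add_sqrt_mul_sqrt (N : ℕ) :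
    ∑ d ∈ Ioc 0 N, N / d + N.sqrt * N.sqrt = 2 * ∑ d ∈ Ioc 0 N.sqrt, N / d := by
  have hsqrt_le : ∀ a ∈ Ioc 0 N.sqrt, N.sqrt ≤ N / a := fun a ha =>
    (Nat.le_div_iff_mul_le (mem_Ioc.1 ha).1).2 <|
      (Nat.mul_le_mul_left _ (mem_Ioc.1 ha).2).trans (Nat.sqrt_le N)
  have htail : ∑ a ∈ Ioc 0 N.sqrt, (N / a - N.sqrt) + N.sqrt * N.sqrt
      = ∑ a ∈ Ioc 0 N.sqrt, N / a := by
    rw [← sum_congr rfl fun a ha => Nat.sub_add_cancel (hsqrt_le a ha), sum_add_distrib,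
      sum_const, Nat.card_Ioc, Nat.sub_zero, smul_eq_mul]
  rw [← sum_Ioc_consecutive _ (Nat.zero_le _) (Nat.sqrt_le_self N),
    Nat.sum_Ioc_sqrt_div_eq_sum_sub_sqrt]
  omega

theorem Nat.sum_card_divisors_add_sqrt_mul_sqrt (N : ℕ) :
    ∑ n ∈ Ioc 0 N, #n.divisors + N.sqrt * N.sqrt = 2 * ∑ d ∈ Ioc 0 N.sqrt, N / d := by
  simp_rw [← ArithmeticFunction.sigma_zero_apply]
  rw [ArithmeticFunction.sum_Ioc_sigma0_eq_sum_div, Nat.sum_div_add_sqrt_mul_sqrt]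

lemma Real.log_le_log_add_div {x y : ℝ} (hx : 0 < x) (hy : 0 < y) :
    log y ≤ log x + (y - x) / x := by
  have h := log_le_sub_one_of_pos (div_pos hy hx)
  rw [log_div hy.ne' hx.ne'] at h
  rw [sub_div, div_self hx.ne']
  linarith

lemma Real.mul_log_sub_mul_log_le {x y : ℝ} (hx : 0 < x) (hy : 0 < y) :
    y * log y - x * log x ≤ (y - x) * (log y + 1) := by
  have h := mul_le_mul_of_nonneg_left (log_le_log_add_div hx hy) hx.le
  rw [mul_add, mul_div_cancel₀ _ hx.ne'] at h
  linarith

lemma abs_harmonic_sub_log_sub_eulerMascheroniConstant_le {n : ℕ} (hn : n ≠ 0) :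
    |(harmonic n : ℝ) - log n - eulerMascheroniConstant| ≤ 1 / n := by
  have hlower := eulerMascheroniConstant_lt_eulerMascheroniSeq' n
  have hupper := eulerMascheroniSeq_lt_eulerMascheroniConstant n
  rw [eulerMascheroniSeq', if_neg hn] at hlower
  rw [eulerMascheroniSeq] at hupper
  have hstep := log_le_log_add_div (x := n) (y := n + 1) (by positivity) (by positivity)
  rw [add_sub_cancel_left] at hstep
  rw [abs_le]
  constructor <;> linarith

lemma abs_natCast_div_sub_div_le_one (N d : ℕ) : |((N / d : ℕ) : ℝ) - N / d| ≤ 1 := by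
  have hfloor := Nat.floor_div_eq_div (K := ℝ) N d
  have hle := Nat.floor_le (by positivity : (0 : ℝ) ≤ N / d)
  have hlt := Nat.sub_one_lt_floor ((N : ℝ) / d)
  rw [hfloor] at hle hlt
  rw [abs_le]
  constructor <;> linarith

lemma abs_sum_div_sub_mul_harmonic_le (N K : ℕ) :
    |∑ d ∈ Ioc 0 K, ((N / d : ℕ) : ℝ) - N * harmonic K| ≤ K := by
  have hharmonic : (N : ℝ) * harmonic K = ∑ d ∈ Ioc 0 K, (N : ℝ) / d := by
    rw [harmonic_eq_sum_Icc, Rat.cast_sum, mul_sum]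
    exact sum_congr rfl fun d _ => by push_cast; rw [div_eq_mul_inv]
  calc |∑ d ∈ Ioc 0 K, ((N / d : ℕ) : ℝ) - N * harmonic K|
      = |∑ d ∈ Ioc 0 K, (((N / d : ℕ) : ℝ) - N / d)| := by rw [hharmonic, sum_sub_distrib]
    _ ≤ ∑ d ∈ Ioc 0 K, |((N / d : ℕ) : ℝ) - N / d| := abs_sum_le_sum_abs _ _
    _ ≤ ∑ _d ∈ Ioc 0 K, (1 : ℝ) := sum_le_sum fun d _ => abs_natCast_div_sub_div_le_one N d
    _ = K := by simp

theorem abs_sum_card_divisors_sub_le {N : ℕ} (hN : N ≠ 0) :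
    |∑ n ∈ Icc 1 N, (#n.divisors : ℝ) - (N * log N + (2 * eulerMascheroniConstant - 1) * N)|
      ≤ 16 * N.sqrt := by
  set K := N.sqrt
  have hK : (1 : ℝ) ≤ K := by exact_mod_cast Nat.sqrt_pos.2 (Nat.pos_of_ne_zero hN)
  have hK_sq : (K : ℝ) * K ≤ N := by exact_mod_cast Nat.sqrt_le N
  have hN_le : (N : ℝ) ≤ K * K + 2 * K := by
    have : N < (K + 1) * (K + 1) := Nat.lt_succ_sqrt N
    exact_mod_cast (by nlinarith : N ≤ K * K + 2 * K)
  have hhyperbola : ∑ n ∈ Icc 1 N, (#n.divisors : ℝ) + K * K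
      = 2 * ∑ d ∈ Ioc 0 K, ((N / d : ℕ) : ℝ) := by
    exact_mod_cast Nat.sum_card_divisors_add_sqrt_mul_sqrt N
  have hfloor := abs_le.1 (abs_sum_div_sub_mul_harmonic_le N K)
  have hharmonic : |N * (harmonic K : ℝ) - N * (log K + eulerMascheroniConstant)| ≤ K + 2 := by
    rw [← mul_sub, abs_mul, Nat.abs_cast, ← sub_sub]
    calc (N : ℝ) * |(harmonic K : ℝ) - log K - eulerMascheroniConstant| ≤ N * (1 / K) :=
          mul_le_mul_of_nonneg_left
            (abs_harmonic_sub_log_sub_eulerMascheroniConstant_le (by positivity)) N.cast_nonneg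
      _ ≤ K + 2 := by rw [mul_one_div, div_le_iff₀ (by positivity)]; nlinarith
  have hlog_lower : 2 * N * log K ≤ N * log N := by
    have := log_le_log (by positivity) hK_sq
    rw [log_mul (by positivity) (by positivity)] at this
    nlinarith [N.cast_nonneg (α := ℝ)]
  have hlog_upper : N * log N - 2 * N * log K ≤ 6 * K := by
    have h := mul_le_mul_of_nonneg_left
      (log_le_log_add_div (x := K * K) (y := N) (by positivity) (by positivity)) N.cast_nonneg
    rw [log_mul (by positivity) (by positivity)] at h
    have hbound : (N : ℝ) * ((N - K * K) / (K * K)) ≤ 6 * K := by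
      rw [mul_div_assoc', div_le_iff₀ (by positivity)]
      nlinarith
    nlinarith
  have h := abs_le.1 hharmonic
  rw [abs_le]
  constructor <;> linarith

theorem stmt_11 :
    ∃ C C' : ℝ, ∀ z : ℝ, 1 ≤ z →
      |(∑ n ∈ Finset.Icc 1 ⌊z⌋₊, (n.divisors.card : ℝ)) - (z * Real.log z + C * z)| ≤
        C' * Real.sqrt z := by
  refine ⟨2 * eulerMascheroniConstant - 1, 20, fun z hz => ?_⟩
  set N := ⌊z⌋₊
  have hN : N ≠ 0 := (Nat.floor_pos.2 hz).ne'
  have hN_pos : (0 : ℝ) < N := by positivity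
  have hN_le : (N : ℝ) ≤ z := Nat.floor_le (by linarith)
  have hz_lt : z < N + 1 := Nat.lt_floor_add_one z
  have hmain := abs_le.1 (abs_sum_card_divisors_sub_le hN)
  have hsqrt : (N.sqrt : ℝ) ≤ √z := Real.nat_sqrt_le_real_sqrt.trans (Real.sqrt_le_sqrt hN_le)
  have hone_le_sqrt : 1 ≤ √z := Real.one_le_sqrt.2 hz
  have hlog_le : log z ≤ 2 * √z :=
    calc log z ≤ z ^ (1 / 2 : ℝ) / (1 / 2) := log_le_rpow_div (by linarith) (by norm_num)
      _ = 2 * √z := by rw [← Real.sqrt_eq_rpow]; ring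
  have hmul_log_le : N * log N ≤ z * log z :=
    mul_le_mul hN_le (log_le_log hN_pos hN_le)
      (log_nonneg (Nat.one_le_cast.2 (Nat.pos_of_ne_zero hN))) (by linarith)
  have hmul_log_sub_le : z * log z - N * log N ≤ log z + 1 := by
    have := mul_log_sub_mul_log_le hN_pos (by linarith : (0 : ℝ) < z)
    nlinarith [log_nonneg hz]
  have hγ := one_half_lt_eulerMascheroniConstant
  have hγ' := eulerMascheroniConstant_lt_two_thirds
  have hconst_nonneg : 0 ≤ (2 * eulerMascheroniConstant - 1) * (z - N) := by nlinarith
  have hconst_le : (2 * eulerMascheroniConstant - 1) * (z - N) ≤ 1 := by nlinarith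
  rw [abs_le]
  constructor <;> linarith
end

section
/- ∑_{n ≤ z} τ(n)/n = (1/2)·log²(z) + C₂·log(z) + C₃ + O(z^(−1/4)) for z ≥ 1, for some absolute constants C₂, C₃. -/
/-!
Dirichlet's hyperbola method with `D = ⌊√z⌋` gives
`∑_{n ≤ z} τ(n)/n = 2 ∑_{d ≤ √z} H(z/d)/d - H(√z)²`, where `H(x) = ∑_{m ≤ x} 1/m`.
Inserting `H(x) = log x + γ + O(1/x)` leaves the sum `∑_{d ≤ √z} log d / d`, which equals
`(log √z)² / 2 + c + O(log z / √z)` by comparison with `∫ log x / x`, whose integrand decreases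
for `x ≥ e`. Every error term is `O(log z / √z) = O(z^(-1/4))`.
-/

open Finset Filter Real Asymptotics

lemma Nat.filter_Ioc_mul_le {n : ℕ} (N : ℕ) (hn : 0 < n) :
    {m ∈ Ioc 0 N | n * m ≤ N} = Ioc 0 (N / n) := by
  ext m
  simp only [mem_filter, mem_Ioc, Nat.le_div_iff_mul_le hn, mul_comm m]
  constructor
  · rintro ⟨⟨hm, -⟩, h⟩
    exact ⟨hm, h⟩
  · rintro ⟨hm, h⟩
    exact ⟨⟨hm, le_trans (Nat.le_mul_of_pos_left m hn) h⟩, h⟩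

lemma sum_filter_mul_le_and_fst_le {R : Type*} [AddCommMonoid R] (F : ℕ → ℕ → R) {N D : ℕ}
    (hDN : D ≤ N) :
    ∑ x ∈ Ioc 0 N ×ˢ Ioc 0 N with x.1 * x.2 ≤ N ∧ x.1 ≤ D, F x.1 x.2 =
      ∑ n ∈ Ioc 0 D, ∑ m ∈ Ioc 0 (N / n), F n m := by
  have : (Ioc 0 N ×ˢ Ioc 0 N).filter (fun x => x.1 * x.2 ≤ N ∧ x.1 ≤ D) =
      (Ioc 0 D ×ˢ Ioc 0 N).filter (fun x => x.1 * x.2 ≤ N) := by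
    ext x
    simp only [mem_filter, mem_product, mem_Ioc]
    omega
  rw [this, sum_filter, sum_product]
  refine sum_congr rfl fun n hn => ?_
  rw [← sum_filter, Nat.filter_Ioc_mul_le N (mem_Ioc.1 hn).1]

namespace ArithmeticFunction

variable {R : Type*} [CommSemiring R]

/-- The Dirichlet hyperbola method: the pairs `(a, b)` with `a * b ≤ N` are those with `a ≤ D`
or `b ≤ D`, and both hold exactly on the square `D × D`. -/
theorem sum_Ioc_mul_add_sum_mul_sum (f g : ArithmeticFunction R) {N D : ℕ}
    (hDN : D * D ≤ N) (hND : N < (D + 1) * (D + 1)) :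
    ∑ n ∈ Ioc 0 N, (f * g) n + (∑ n ∈ Ioc 0 D, f n) * ∑ n ∈ Ioc 0 D, g n =
      ∑ n ∈ Ioc 0 D, f n * ∑ m ∈ Ioc 0 (N / n), g m +
        ∑ n ∈ Ioc 0 D, g n * ∑ m ∈ Ioc 0 (N / n), f m := by
  have hD : D ≤ N := le_trans (Nat.le_mul_self D) hDN
  rw [sum_Ioc_mul_eq_sum_prod_filter]
  set T := (Ioc 0 N ×ˢ Ioc 0 N).filter (fun x : ℕ × ℕ => x.1 * x.2 ≤ N)
  have hunion : T = T.filter (fun x => x.1 ≤ D) ∪ T.filter (fun x => x.2 ≤ D) := by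
    rw [← filter_or, filter_true_of_mem]
    intro x hx
    simp only [T, mem_filter] at hx
    by_contra! h
    nlinarith [hx.2, h.1, h.2]
  have hinter : T.filter (fun x => x.1 ≤ D) ∩ T.filter (fun x => x.2 ≤ D) =
      Ioc 0 D ×ˢ Ioc 0 D := by
    ext x
    simp only [T, mem_inter, mem_filter, mem_product, mem_Ioc]
    constructor
    · omega
    · intro h
      have := Nat.mul_le_mul h.1.2 h.2.2
      omega
  have hswap : ∑ x ∈ T with x.2 ≤ D, f x.1 * g x.2 = ∑ x ∈ T with x.1 ≤ D, g x.1 * f x.2 := by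
    refine sum_nbij' Prod.swap Prod.swap ?_ ?_ (fun _ _ => rfl) (fun _ _ => rfl)
      (fun _ _ => mul_comm _ _)
    all_goals
      intro x
      simp only [T, mem_filter, mem_product, Prod.fst_swap, Prod.snd_swap, mul_comm x.2 x.1]
      tauto
  rw [hunion, sum_mul_sum, ← sum_product', ← hinter, sum_union_inter, hswap,
    filter_filter, sum_filter_mul_le_and_fst_le (fun a b => f a * g b) hD,
    sum_filter_mul_le_and_fst_le (fun a b => g a * f b) hD]
  simp only [mul_sum]

end ArithmeticFunction

lemma sum_Ioc_inv_eq_harmonic (M : ℕ) : ∑ m ∈ Ioc 0 M, (m : ℝ)⁻¹ = harmonic M := by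
  rw [harmonic_eq_sum_Icc, ← Icc_add_one_left_eq_Ioc]
  push_cast
  rfl

lemma sum_divisorsAntidiagonal_inv_mul_inv (n : ℕ) :
    ∑ x ∈ n.divisorsAntidiagonal, (x.1 : ℝ)⁻¹ * (x.2 : ℝ)⁻¹ = (n.divisors.card : ℝ) / n := by
  rw [Nat.sum_divisorsAntidiagonal (fun a b => (a : ℝ)⁻¹ * (b : ℝ)⁻¹), card_eq_sum_ones,
    Nat.cast_sum, sum_div]
  refine sum_congr rfl fun d hd => ?_
  rw [← mul_inv, ← Nat.cast_mul, Nat.mul_div_cancel' (Nat.dvd_of_mem_divisors hd)]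
  simp

lemma sum_card_divisors_div_eq {z : ℝ} (hz : 0 ≤ z) :
    ∑ n ∈ Icc 1 ⌊z⌋₊, (n.divisors.card : ℝ) / n =
      2 * ∑ d ∈ Icc 1 ⌊√z⌋₊, (harmonic ⌊z / d⌋₊ : ℝ) / d - (harmonic ⌊√z⌋₊ : ℝ) ^ 2 := by
  let ι : ArithmeticFunction ℝ := ⟨fun n => (n : ℝ)⁻¹, by simp⟩
  have hι (n : ℕ) : ι n = (n : ℝ)⁻¹ := rfl
  have hιι (n : ℕ) : (ι * ι) n = (n.divisors.card : ℝ) / n := by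
    simp only [ArithmeticFunction.mul_apply, hι, sum_divisorsAntidiagonal_inv_mul_inv]
  have hD : (⌊√z⌋₊ : ℝ) ≤ √z := Nat.floor_le (sqrt_nonneg z)
  have hD' : √z < ⌊√z⌋₊ + 1 := Nat.lt_floor_add_one _
  have hsq : √z * √z = z := mul_self_sqrt hz
  have hDN : ⌊√z⌋₊ * ⌊√z⌋₊ ≤ ⌊z⌋₊ := Nat.le_floor (by push_cast; nlinarith [sqrt_nonneg z])
  have hND : ⌊z⌋₊ < (⌊√z⌋₊ + 1) * (⌊√z⌋₊ + 1) := by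
    have : z < (⌊√z⌋₊ + 1) * (⌊√z⌋₊ + 1) := by nlinarith [sqrt_nonneg z]
    exact_mod_cast (Nat.floor_le hz).trans_lt this
  have h := ArithmeticFunction.sum_Ioc_mul_add_sum_mul_sum ι ι hDN hND
  simp only [hιι, hι, sum_Ioc_inv_eq_harmonic, ← Nat.floor_div_natCast] at h
  simp only [← Icc_add_one_left_eq_Ioc, zero_add] at h
  simp only [div_eq_inv_mul] at h ⊢
  linear_combination h

lemma log_le_log_add_inv {x y : ℝ} (hx : 0 < x) (hxy : y ≤ x + 1) (hy : 0 < y) :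
    log y ≤ log x + x⁻¹ := by
  have h := log_le_sub_one_of_pos (div_pos hy hx)
  rw [log_div hy.ne' hx.ne', div_sub_one hx.ne'] at h
  have : (y - x) / x ≤ x⁻¹ := by
    rw [div_le_iff₀ hx, inv_mul_cancel₀ hx.ne']
    linarith
  linarith

lemma inv_floor_le_two_div {x : ℝ} (hx : 1 ≤ x) : (⌊x⌋₊ : ℝ)⁻¹ ≤ 2 / x := by
  have hN : (1 : ℝ) ≤ ⌊x⌋₊ := by exact_mod_cast Nat.le_floor (by exact_mod_cast hx)
  rw [inv_le_comm₀ (by positivity) (by positivity), inv_div]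
  linarith [Nat.lt_floor_add_one x]

lemma abs_harmonic_floor_sub_log_sub_le {x : ℝ} (hx : 1 ≤ x) :
    |(harmonic ⌊x⌋₊ : ℝ) - log x - eulerMascheroniConstant| ≤ 2 / x := by
  have hn : 1 ≤ ⌊x⌋₊ := Nat.le_floor (by exact_mod_cast hx)
  have hn0 : (0 : ℝ) < ⌊x⌋₊ := by exact_mod_cast hn
  -- `γ` and `H ⌊x⌋ - log x` both lie between `H n - log (n + 1)` and `H n - log n`, `n = ⌊x⌋`.
  have hlow := eulerMascheroniSeq_lt_eulerMascheroniConstant ⌊x⌋₊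
  have hup := eulerMascheroniConstant_lt_eulerMascheroniSeq' ⌊x⌋₊
  rw [eulerMascheroniSeq] at hlow
  rw [eulerMascheroniSeq', if_neg (by omega)] at hup
  have hlog_floor := log_le_log hn0 (Nat.floor_le (by linarith))
  have hlog_succ := log_le_log_add_inv hn0 le_rfl (by positivity)
  have hlog_x := log_le_log_add_inv hn0 (Nat.lt_floor_add_one x).le (by linarith)
  have hinv := inv_floor_le_two_div hx
  rw [abs_le]
  constructor <;> linarith

lemma abs_sum_harmonic_remainder_div_le {z : ℝ} (hz : 1 ≤ z) :
    |∑ d ∈ Icc 1 ⌊√z⌋₊,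
        ((harmonic ⌊z / d⌋₊ : ℝ) - log (z / d) - eulerMascheroniConstant) / d| ≤ 2 / √z := by
  have hz0 : 0 < z := by linarith
  have hterm : ∀ d ∈ Icc 1 ⌊√z⌋₊,
      |((harmonic ⌊z / d⌋₊ : ℝ) - log (z / d) - eulerMascheroniConstant) / d| ≤ 2 / z := by
    intro d hd
    have hd1 : (1 : ℝ) ≤ d := by exact_mod_cast (mem_Icc.1 hd).1
    have hdz : (d : ℝ) ≤ z := calc
      (d : ℝ) ≤ ⌊√z⌋₊ := by exact_mod_cast (mem_Icc.1 hd).2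
      _ ≤ √z := Nat.floor_le (sqrt_nonneg z)
      _ ≤ z := sqrt_le_self_iff.2 (Or.inr hz)
    rw [abs_div, Nat.abs_cast, div_le_iff₀ (by positivity)]
    calc _ ≤ 2 / (z / d) := abs_harmonic_floor_sub_log_sub_le ((one_le_div (by positivity)).2 hdz)
      _ = 2 / z * d := by field_simp
  calc _ ≤ ∑ d ∈ Icc 1 ⌊√z⌋₊,
        |((harmonic ⌊z / d⌋₊ : ℝ) - log (z / d) - eulerMascheroniConstant) / d| :=
        abs_sum_le_sum_abs _ _
    _ ≤ ⌊√z⌋₊ * (2 / z) := by simpa using sum_le_card_nsmul _ _ _ hterm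
    _ ≤ √z * (2 / z) := by gcongr; exact Nat.floor_le (sqrt_nonneg z)
    _ = 2 / √z := by
      field_simp
      rw [sq_sqrt hz0.le]

lemma sum_harmonic_div_eq {z : ℝ} (hz : 0 < z) (D : ℕ) :
    ∑ d ∈ Icc 1 D, (harmonic ⌊z / d⌋₊ : ℝ) / d =
      (log z + eulerMascheroniConstant) * harmonic D - ∑ d ∈ Icc 1 D, log d / d +
        ∑ d ∈ Icc 1 D, ((harmonic ⌊z / d⌋₊ : ℝ) - log (z / d) - eulerMascheroniConstant) / d := by
  rw [harmonic_eq_sum_Icc]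
  push_cast
  rw [mul_sum, ← sum_sub_distrib, ← sum_add_distrib]
  refine sum_congr rfl fun d hd => ?_
  have hd0 : (0 : ℝ) < d := by exact_mod_cast (mem_Icc.1 hd).1
  rw [log_div hz.ne' hd0.ne']
  field_simp
  ring

namespace AntitoneOn

variable {f : ℝ → ℝ}

lemma sum_Ioc_le_integral_and_integral_le {N M : ℕ} (hNM : N ≤ M)
    (hf : AntitoneOn f (Set.Icc N M)) :
    ∑ n ∈ Ioc N M, f n ≤ ∫ x in N..M, f x ∧
      ∫ x in N..M, f x ≤ ∑ n ∈ Ioc N M, f n + (f N - f M) := by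
  have hshift : ∑ n ∈ Ioc N M, f n = ∑ i ∈ Ico N M, f ↑(i + 1) := by
    rw [← Ico_add_one_add_one_eq_Ioc, ← sum_Ico_add' (fun n : ℕ => f n)]
  have htel : ∑ i ∈ Ico N M, (f ↑(i + 1) - f i) = f M - f N := sum_Ico_sub (fun n : ℕ => f n) hNM
  rw [sum_sub_distrib] at htel
  exact ⟨hshift ▸ hf.sum_le_integral_Ico hNM, by linarith [hf.integral_le_sum_Ico hNM]⟩

theorem exists_abs_sum_Ioc_sub_integral_sub_le {a : ℕ} (hf : AntitoneOn f (Set.Ici a))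
    (hf0 : ∀ n : ℕ, a ≤ n → 0 ≤ f n) :
    ∃ c, ∀ N : ℕ, a ≤ N → |(∑ n ∈ Ioc a N, f n) - (∫ x in (a : ℝ)..N, f x) - c| ≤ f N := by
  obtain ⟨d, hd_def⟩ : ∃ d : ℕ → ℝ, ∀ N, d N = (∫ x in (a : ℝ)..N, f x) - ∑ n ∈ Ioc a N, f n :=
    ⟨_, fun _ => rfl⟩
  have hd {N M : ℕ} (haN : a ≤ N) (hNM : N ≤ M) : 0 ≤ d M - d N ∧ d M - d N ≤ f N - f M := by
    have hint {b : ℕ} (hb : a ≤ b) : IntervalIntegrable f MeasureTheory.volume a b := by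
      refine (hf.mono fun x hx => ?_).intervalIntegrable
      rw [Set.uIcc_of_le (by exact_mod_cast hb)] at hx
      exact hx.1
    have hdiff : d M - d N = (∫ x in (N : ℝ)..M, f x) - ∑ n ∈ Ioc N M, f n := by
      have hint_sub := intervalIntegral.integral_interval_sub_left (hint (haN.trans hNM)) (hint haN)
      have hsum_add := sum_Ioc_consecutive (fun n : ℕ => f n) haN hNM
      rw [hd_def, hd_def]
      linarith
    have := sum_Ioc_le_integral_and_integral_le hNM
      (hf.mono fun x hx => le_trans (by exact_mod_cast haN) hx.1)
    constructor <;> linarith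
  have hbdd : BddAbove (Set.range fun k => d (a + k)) := by
    refine ⟨f a, ?_⟩
    rintro _ ⟨k, rfl⟩
    have h0 : d a = 0 := by simp [hd_def]
    linarith [(hd le_rfl (Nat.le_add_right a k)).2, hf0 (a + k) (Nat.le_add_right a k)]
  -- `d` increases on `[a, ∞)` and is bounded by `f a`, so its supremum is its limit.
  refine ⟨-⨆ k, d (a + k), fun N haN => ?_⟩
  have hle : d N ≤ ⨆ k, d (a + k) := by
    simpa [Nat.add_sub_cancel' haN] using le_ciSup hbdd (N - a)
  have hge : ⨆ k, d (a + k) ≤ d N + f N := ciSup_le fun k => by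
    rcases le_total (a + k) N with h | h
    · linarith [(hd (Nat.le_add_right a k) h).1, hf0 N haN]
    · linarith [(hd haN h).2, hf0 (a + k) (Nat.le_add_right a k)]
  rw [hd_def N] at hle hge
  rw [abs_le]
  constructor <;> linarith

end AntitoneOn

theorem integral_log_div_self {a b : ℝ} (ha : 0 < a) (hb : 0 < b) :
    ∫ x in a..b, log x / x = log b ^ 2 / 2 - log a ^ 2 / 2 := by
  have hpos : ∀ x ∈ Set.uIcc a b, 0 < x := fun x hx => lt_of_lt_of_le (lt_min ha hb) hx.1
  refine intervalIntegral.integral_eq_sub_of_hasDerivAt (f := fun x => log x ^ 2 / 2)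
    (fun x hx => ?_) ?_
  · exact (((hasDerivAt_log (hpos x hx).ne').fun_pow 2).div_const 2).congr_deriv (by
      norm_num
      ring)
  · exact ContinuousOn.intervalIntegrable <| (continuousOn_log.mono fun x hx => (hpos x hx).ne').div
      continuousOn_id fun x hx => (hpos x hx).ne'

lemma exists_abs_sum_Icc_log_div_self_sub_le :
    ∃ c, ∀ N : ℕ, 3 ≤ N → |(∑ n ∈ Icc 1 N, log n / n) - log N ^ 2 / 2 - c| ≤ log N / N := by
  have hanti : AntitoneOn (fun x => log x / x) (Set.Ici ((3 : ℕ) : ℝ)) :=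
    log_div_self_antitoneOn.mono <| Set.Ici_subset_Ici.2 <| by
      norm_num
      linarith [exp_one_lt_d9]
  obtain ⟨c, hc⟩ := hanti.exists_abs_sum_Ioc_sub_integral_sub_le fun n hn =>
    div_nonneg (log_nonneg (by exact_mod_cast (by omega : 1 ≤ n))) n.cast_nonneg
  refine ⟨c + log 2 / 2 + log 3 / 3 - log 3 ^ 2 / 2, fun N hN => ?_⟩
  have hsplit : ∑ n ∈ Icc 1 N, log n / n = log 2 / 2 + log 3 / 3 + ∑ n ∈ Ioc 3 N, log n / n := by
    rw [show Icc 1 N = Ioc 0 N from Icc_add_one_left_eq_Ioc 0 N,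
      ← sum_Ioc_consecutive _ (Nat.zero_le 3) hN, show Ioc 0 3 = {1, 2, 3} from rfl]
    simp
  have h := hc N hN
  rw [integral_log_div_self (by norm_num) (by positivity)] at h
  rw [hsplit]
  convert h using 2
  push_cast
  ring

lemma abs_sum_log_div_self_sub_le_of_lt_three (c : ℝ) {y : ℝ} (hy : 1 ≤ y) (hy3 : y < 3) :
    |(∑ n ∈ Icc 1 ⌊y⌋₊, log n / n) - log y ^ 2 / 2 - c| ≤ (10 + 2 * |c|) / √y := by
  have hy0 : 0 < y := by linarith
  have hsum_nonneg : 0 ≤ ∑ n ∈ Icc 1 ⌊y⌋₊, log n / n := sum_nonneg fun n hn =>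
    div_nonneg (log_nonneg (by exact_mod_cast (mem_Icc.1 hn).1)) n.cast_nonneg
  have hsum_le : ∑ n ∈ Icc 1 ⌊y⌋₊, log n / n ≤ ⌊y⌋₊ := by
    refine (sum_le_card_nsmul _ _ 1 fun n _ => ?_).trans (by simp)
    exact div_le_one_of_le₀ (log_le_self n.cast_nonneg) n.cast_nonneg
  have hfloor : (⌊y⌋₊ : ℝ) ≤ y := Nat.floor_le hy0.le
  have hlog_le : log y ≤ 2 := by linarith [log_le_sub_one_of_pos hy0]
  have hlog_nonneg : 0 ≤ log y := log_nonneg hy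
  have hsqrt_le : √y ≤ 2 := by nlinarith [sq_sqrt hy0.le, sqrt_nonneg y]
  calc _ ≤ 5 + |c| := by
        rw [abs_le]
        constructor <;> nlinarith [neg_abs_le c, le_abs_self c]
    _ = (10 + 2 * |c|) / 2 := by ring
    _ ≤ (10 + 2 * |c|) / √y := div_le_div_of_nonneg_left (by positivity) (sqrt_pos.2 hy0) hsqrt_le

lemma abs_sum_log_div_self_sub_le_of_three_le {c : ℝ}
    (hc : ∀ N : ℕ, 3 ≤ N → |(∑ n ∈ Icc 1 N, log n / n) - log N ^ 2 / 2 - c| ≤ log N / N)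
    {y : ℝ} (hy : 3 ≤ y) :
    |(∑ n ∈ Icc 1 ⌊y⌋₊, log n / n) - log y ^ 2 / 2 - c| ≤ 8 / √y := by
  have hy0 : 0 < y := by linarith
  have hN3 : 3 ≤ ⌊y⌋₊ := Nat.le_floor (by exact_mod_cast hy)
  have hN0 : (0 : ℝ) < ⌊y⌋₊ := by positivity
  have hlogN : log ⌊y⌋₊ ≤ log y := log_le_log hN0 (Nat.floor_le hy0.le)
  have hlogN0 : 0 ≤ log ⌊y⌋₊ := log_nonneg (by exact_mod_cast (by omega : 1 ≤ ⌊y⌋₊))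
  have hlogy := log_le_log_add_inv hN0 (Nat.lt_floor_add_one y).le hy0
  have hlog_sqrt : log y ≤ 2 * √y := by linarith [log_sqrt hy0.le, log_le_self (sqrt_nonneg y)]
  have hsq : (log y ^ 2 - log ⌊y⌋₊ ^ 2) / 2 ≤ log y * (⌊y⌋₊ : ℝ)⁻¹ := by nlinarith
  have hsq' : 0 ≤ log y ^ 2 - log ⌊y⌋₊ ^ 2 := by nlinarith
  have hmono : log ⌊y⌋₊ * (⌊y⌋₊ : ℝ)⁻¹ ≤ log y * (⌊y⌋₊ : ℝ)⁻¹ :=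
    mul_le_mul_of_nonneg_right hlogN (inv_nonneg.2 hN0.le)
  have hmain : log y * (⌊y⌋₊ : ℝ)⁻¹ ≤ 4 / √y := calc
    _ ≤ (2 * √y) * (2 / y) :=
      mul_le_mul hlog_sqrt (inv_floor_le_two_div (by linarith)) (by positivity) (by positivity)
    _ = 4 / √y := by
      field_simp
      rw [sq_sqrt hy0.le]
      ring
  obtain ⟨hc₁, hc₂⟩ := abs_le.1 (hc _ hN3)
  rw [div_eq_mul_inv (log _)] at hc₁ hc₂
  have h8 : 8 / √y = 2 * (4 / √y) := by ring
  rw [abs_le]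
  constructor <;> linarith

lemma exists_abs_sum_log_div_self_sub_le :
    ∃ c C : ℝ, ∀ y : ℝ, 1 ≤ y →
      |(∑ n ∈ Icc 1 ⌊y⌋₊, log n / n) - log y ^ 2 / 2 - c| ≤ C / √y := by
  obtain ⟨c, hc⟩ := exists_abs_sum_Icc_log_div_self_sub_le
  refine ⟨c, 10 + 2 * |c|, fun y hy => ?_⟩
  rcases lt_or_ge y 3 with hy3 | hy3
  · exact abs_sum_log_div_self_sub_le_of_lt_three c hy hy3
  · refine (abs_sum_log_div_self_sub_le_of_three_le hc hy3).trans ?_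
    gcongr
    linarith [abs_nonneg c]

/-- With `z = w ^ 4` and `ℓ = log w`, the error in the theorem is this combination of the errors
`e₁` of `H(√z)`, `e₂` of `∑_{d ≤ √z} log d / d` and `E` of the terms `H(z / d) / d`. -/
lemma abs_combined_error_le {ℓ w e₁ e₂ E C : ℝ} (hw : 1 ≤ w) (hℓ₀ : 0 ≤ ℓ) (hℓ : ℓ ≤ w)
    (he₁ : |e₁| ≤ 2 / w ^ 2) (he₂ : |e₂| ≤ C / w) (hE : |E| ≤ 2 / w ^ 2) :
    |4 * ℓ * e₁ - e₁ ^ 2 - 2 * e₂ + 2 * E| ≤ (16 + 2 * C) * w⁻¹ := by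
  have hw0 : 0 < w := by linarith
  have hu : w⁻¹ ≤ 1 := inv_le_one_of_one_le₀ hw
  have hu0 : 0 < w⁻¹ := inv_pos.2 hw0
  have hsq : 2 / w ^ 2 = 2 * w⁻¹ * w⁻¹ := by field_simp
  rw [hsq] at he₁ hE
  rw [div_eq_mul_inv] at he₂
  have h₁ : |4 * ℓ * e₁| ≤ 8 * w⁻¹ := by
    rw [abs_mul, abs_of_nonneg (by positivity)]
    calc _ ≤ 4 * w * (2 * w⁻¹ * w⁻¹) := by gcongr
      _ = 8 * w⁻¹ := by
        field_simp
        norm_num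
  have h₂ : |e₁ ^ 2| ≤ 4 * w⁻¹ := by
    rw [abs_pow]
    calc _ ≤ (2 * w⁻¹ * w⁻¹) ^ 2 := by gcongr
      _ ≤ 4 * w⁻¹ := by
        have : w⁻¹ ^ 3 ≤ 1 := pow_le_one₀ hu0.le hu
        nlinarith
  have h₃ : |2 * E| ≤ 4 * w⁻¹ := by
    rw [abs_mul, abs_two]
    nlinarith
  obtain ⟨h₁l, h₁r⟩ := abs_le.1 h₁
  obtain ⟨h₂l, h₂r⟩ := abs_le.1 h₂
  obtain ⟨h₃l, h₃r⟩ := abs_le.1 h₃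
  obtain ⟨h₄l, h₄r⟩ := abs_le.1 he₂
  rw [abs_le]
  constructor <;> linarith

theorem stmt_12 :
    ∃ C₂ C₃ C : ℝ, ∀ z : ℝ, 1 ≤ z →
      |(∑ n ∈ Finset.Icc 1 ⌊z⌋₊, (n.divisors.card : ℝ) / n) -
          ((1 / 2) * (Real.log z) ^ 2 + C₂ * Real.log z + C₃)| ≤ C * z ^ (-(1 / 4) : ℝ) := by
  obtain ⟨c, C, hC⟩ := exists_abs_sum_log_div_self_sub_le
  refine ⟨2 * eulerMascheroniConstant, eulerMascheroniConstant ^ 2 - 2 * c, 16 + 2 * C,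
    fun z hz => ?_⟩
  obtain ⟨w, hw, rfl⟩ : ∃ w : ℝ, 1 ≤ w ∧ w ^ 4 = z := ⟨z ^ (4 : ℝ)⁻¹, one_le_rpow hz (by norm_num),
    by rw [← rpow_natCast, ← rpow_mul (by linarith)]; norm_num⟩
  have hw0 : 0 < w := by linarith
  have hsqrt : √(w ^ 4) = w ^ 2 := by
    rw [show w ^ 4 = (w ^ 2) ^ 2 by ring, sqrt_sq (by positivity)]
  have hrpow : (w ^ 4) ^ (-(1 / 4) : ℝ) = w⁻¹ := by
    rw [← rpow_natCast, ← rpow_mul hw0.le]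
    norm_num [rpow_neg_one]
  have hlog2 : log (w ^ 2) = 2 * log w := by simp [log_pow]
  have hlog4 : log (w ^ 4) = 4 * log w := by simp [log_pow]
  have he₁ := abs_harmonic_floor_sub_log_sub_le (x := w ^ 2) (by nlinarith)
  have he₂ := hC (w ^ 2) (by nlinarith)
  have hE := abs_sum_harmonic_remainder_div_le (z := w ^ 4) (by nlinarith)
  rw [hlog2] at he₁ he₂
  rw [sqrt_sq hw0.le] at he₂
  rw [hsqrt] at hE
  rw [sum_card_divisors_div_eq (by positivity), sum_harmonic_div_eq (by positivity), hsqrt, hrpow,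
    hlog4]
  have hlogw : log w ≤ w := log_le_self hw0.le
  have hlogw0 : 0 ≤ log w := log_nonneg hw
  convert abs_combined_error_le hw hlogw0 hlogw he₁ he₂ hE using 2
  ring
end

section
/- The partial sums ∑_{d ≤ x} μ(d)/d are bounded: ∑_{d ≤ x} μ(d)/d = O(1); in fact |∑_{d ≤ x} μ(d)/d| ≤ 1 for all x ≥ 1. -/
open Finset Filter Real Asymptotics

open ArithmeticFunction
open scoped ArithmeticFunction.Moebius

/-!
Since `μ * ζ = 1`, summing over `n ≤ N` gives `∑_{d ≤ N} μ(d) ⌊N/d⌋ = 1`. Subtracting this from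
`N ∑_{d ≤ N} μ(d)/d` leaves `∑_{2 ≤ d ≤ N} μ(d) {N/d}`, a sum of `N - 1` terms of absolute value
less than `1`. Hence `|N ∑_{d ≤ N} μ(d)/d - 1| ≤ N - 1`, so `|∑_{d ≤ N} μ(d)/d| ≤ 1`.
-/

theorem ArithmeticFunction.sum_Icc_moebius_mul_div_eq_one {N : ℕ} (hN : 0 < N) :
    ∑ d ∈ Icc 1 N, (μ d : ℝ) * (N / d : ℕ) = 1 := by
  have h := sum_Ioc_mul_zeta_eq_sum ((μ : ArithmeticFunction ℤ) : ArithmeticFunction ℝ) N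
  rw [coe_moebius_mul_coe_zeta,
    sum_eq_single_of_mem 1 (mem_Ioc.2 ⟨one_pos, hN⟩) fun n _ hn ↦ one_apply_ne hn] at h
  simpa [← Icc_add_one_left_eq_Ioc] using h.symm

theorem abs_div_sub_natDiv_lt_one (N d : ℕ) : |(N : ℝ) / d - (N / d : ℕ)| < 1 := by
  rw [← Nat.floor_div_eq_div (K := ℝ), abs_sub_lt_iff]
  have hnonneg : (0 : ℝ) ≤ N / d := by positivity
  constructor
  · linarith [Nat.lt_floor_add_one ((N : ℝ) / d)]
  · linarith [Nat.floor_le hnonneg]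

theorem ArithmeticFunction.mul_sum_Icc_moebius_div_sub_one {N : ℕ} (hN : 0 < N) :
    N * ∑ d ∈ Icc 1 N, (μ d : ℝ) / d - 1
      = ∑ d ∈ Ioc 1 N, (μ d : ℝ) * ((N : ℝ) / d - (N / d : ℕ)) := by
  rw [← sum_Icc_moebius_mul_div_eq_one hN, mul_sum, ← sum_sub_distrib, Icc_eq_cons_Ioc hN,
    sum_cons]
  simp only [moebius_apply_one, Nat.cast_one, Int.cast_one, div_one, Nat.div_one, mul_one, one_mul,
    sub_self, zero_add]
  refine sum_congr rfl fun d hd ↦ ?_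
  have hd : (d : ℝ) ≠ 0 := by have := (mem_Ioc.1 hd).1; positivity
  field_simp

theorem ArithmeticFunction.abs_sum_Icc_moebius_div_le_one (N : ℕ) :
    |∑ d ∈ Icc 1 N, (μ d : ℝ) / d| ≤ 1 := by
  rcases Nat.eq_zero_or_pos N with rfl | hN
  · simp
  set S := ∑ d ∈ Icc 1 N, (μ d : ℝ) / d
  have hbound : |N * S - 1| ≤ N - 1 := by
    rw [mul_sum_Icc_moebius_div_sub_one hN]
    calc _ ≤ ∑ d ∈ Ioc 1 N, |(μ d : ℝ) * ((N : ℝ) / d - (N / d : ℕ))| := abs_sum_le_sum_abs _ _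
      _ ≤ ∑ _d ∈ Ioc 1 N, (1 : ℝ) := sum_le_sum fun d _ ↦ by
          rw [abs_mul]
          exact mul_le_one₀ (mod_cast abs_moebius_le_one) (abs_nonneg _)
            (abs_div_sub_natDiv_lt_one N d).le
      _ = N - 1 := by simp [Nat.cast_sub hN]
  have hNpos : (0 : ℝ) < N := mod_cast hN
  refine le_of_mul_le_mul_left ?_ hNpos
  calc (N : ℝ) * |S| = |N * S - 1 + 1| := by rw [sub_add_cancel, abs_mul, Nat.abs_cast]
    _ ≤ |N * S - 1| + 1 := (abs_add_le _ _).trans (by rw [abs_one])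
    _ ≤ N * 1 := by linarith

theorem stmt_14_general (x : ℝ) :
    |∑ d ∈ Finset.Icc 1 ⌊x⌋₊, (ArithmeticFunction.moebius d : ℝ) / d| ≤ 1 :=
  abs_sum_Icc_moebius_div_le_one ⌊x⌋₊

theorem stmt_14 (x : ℝ) (hx : 1 ≤ x) :
    |∑ d ∈ Finset.Icc 1 ⌊x⌋₊, (ArithmeticFunction.moebius d : ℝ) / d| ≤ 1 :=
  stmt_14_general x
end
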